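/- Let ν ∈ (0,1). Then lim_{x→1⁻} (x−1)·C(x) = (15 + 4ν²)/(4 + ν²) and lim_{x→1⁻} (x−1)²·D(x) = (13 + 4ν²)/(2(4 + ν²)). Consequently, the indicial equation p(p+1) − ((15 + 4ν²)/(4 + ν²))·p + (13 + 4ν²)/(2(4 + ν²)) = 0, equivalently (4 + ν²)p² − (11 + 3ν²)p + (13 + 4ν²)/2 = 0, has exactly the two roots p_± = (11 + 3ν² ± √(17 + 8ν² + ν⁴))/(2(4 + ν²)). -/

import Mathlib

open Set Real

/-- Page metric function `A(x) = (3 − ν² − ν²(1+ν²)x²)(1−x²)/(1−ν²x²)`. -/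
noncomputable def pageA (ν x : ℝ) : ℝ :=
  (3 - ν ^ 2 - ν ^ 2 * (1 + ν ^ 2) * x ^ 2) * (1 - x ^ 2) / (1 - ν ^ 2 * x ^ 2)

/-- Page metric function `B(x) = (1−ν²x²)/(3+6ν²−ν⁴)`. -/
noncomputable def pageB (ν x : ℝ) : ℝ :=
  (1 - ν ^ 2 * x ^ 2) / (3 + 6 * ν ^ 2 - ν ^ 4)

/-- Page metric constant `S = 3(1+ν²)/Λ`. -/
noncomputable def pageS (ν Λ : ℝ) : ℝ := 3 * (1 + ν ^ 2) / Λ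

/-- Page metric constant `α = 1/(2(3+ν²))`. -/
noncomputable def pageAlpha (ν : ℝ) : ℝ := 1 / (2 * (3 + ν ^ 2))

/-- `d = (3 − ν²)/(3 + 6ν² − ν⁴)`. -/
noncomputable def tmd (ν : ℝ) : ℝ := (3 - ν ^ 2) / (3 + 6 * ν ^ 2 - ν ^ 4)

/-- `b = −(3 + ν⁴)/(3 + 6ν² − ν⁴)`. -/
noncomputable def tmb (ν : ℝ) : ℝ := -(3 + ν ^ 4) / (3 + 6 * ν ^ 2 - ν ^ 4)

/-- `c = ν²(1 + ν²)/(3 + 6ν² − ν⁴)`. -/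
noncomputable def tmc (ν : ℝ) : ℝ := ν ^ 2 * (1 + ν ^ 2) / (3 + 6 * ν ^ 2 - ν ^ 4)

/-- `W(x) = c x⁴ + b x² + d`. -/
noncomputable def tmW (ν x : ℝ) : ℝ := tmc ν * x ^ 4 + tmb ν * x ^ 2 + tmd ν

/-- `E(x) = 2x(b + 2c x²)/W(x)`. -/
noncomputable def tmE (ν x : ℝ) : ℝ := 2 * x * (tmb ν + 2 * tmc ν * x ^ 2) / tmW ν x

/-- `F(x) = [2x(3 + ν² + x²)/(B(x)W(x))]·(−1 + 2ν² − ν⁴)/(3 + 6ν² − ν⁴)²`. -/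
noncomputable def tmF (ν x : ℝ) : ℝ :=
  2 * x * (3 + ν ^ 2 + x ^ 2) / (pageB ν x * tmW ν x) *
    ((-1 + 2 * ν ^ 2 - ν ^ 4) / (3 + 6 * ν ^ 2 - ν ^ 4) ^ 2)

/-- `ω(x) = (1/F(x))·[4B″(x)/B(x) + E(x)² − 2(2b + 12c x²)/W(x)]`. -/
noncomputable def tmOmega (ν x : ℝ) : ℝ :=
  (1 / tmF ν x) *
    (4 * deriv (deriv (pageB ν)) x / pageB ν x + tmE ν x ^ 2 -
      2 * ((2 * tmb ν + 12 * tmc ν * x ^ 2) / tmW ν x))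

/-- `C(x) = 3E(x) + B′(x)/B(x) + ω(x)`. -/
noncomputable def tmC (ν x : ℝ) : ℝ :=
  3 * tmE ν x + deriv (pageB ν) x / pageB ν x + tmOmega ν x

/-- `D(x) = E²/2 + 3E B′/(2B) − (B′/B)² + (2b + 12c x²)/W + 3E ω/2`. -/
noncomputable def tmD (ν x : ℝ) : ℝ :=
  tmE ν x ^ 2 / 2 + 3 * tmE ν x * deriv (pageB ν) x / (2 * pageB ν x) -
    (deriv (pageB ν) x / pageB ν x) ^ 2 + (2 * tmb ν + 12 * tmc ν * x ^ 2) / tmW ν x +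
    3 * tmE ν x * tmOmega ν x / 2


/-! ### Auxiliary closed forms -/

/-- `P(x) = ν²(1+ν²)x⁴ − (3+ν⁴)x² + (3−ν²)`, so that `W = P/(3+6ν²−ν⁴)`. -/
noncomputable def iP (ν x : ℝ) : ℝ :=
  ν ^ 2 * (1 + ν ^ 2) * x ^ 4 - (3 + ν ^ 4) * x ^ 2 + (3 - ν ^ 2)

noncomputable def iP1 (ν x : ℝ) : ℝ :=
  4 * ν ^ 2 * (1 + ν ^ 2) * x ^ 3 - 2 * (3 + ν ^ 4) * x

noncomputable def iP2 (ν x : ℝ) : ℝ :=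
  12 * ν ^ 2 * (1 + ν ^ 2) * x ^ 2 - 2 * (3 + ν ^ 4)

noncomputable def iQ (ν x : ℝ) : ℝ := 3 - ν ^ 2 - ν ^ 2 * (1 + ν ^ 2) * x ^ 2

/-- `(x−1)E(x)` in closed form. -/
noncomputable def iE (ν x : ℝ) : ℝ := -iP1 ν x / ((1 + x) * iQ ν x)

/-- `(x−1)B′/B` in closed form. -/
noncomputable def iG (ν x : ℝ) : ℝ := -2 * ν ^ 2 * x * (x - 1) / (1 - ν ^ 2 * x ^ 2)

/-- `(x−1)ω(x)` in closed form. -/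
noncomputable def iWo (ν x : ℝ) : ℝ :=
  -((1 - ν ^ 2 * x ^ 2) * (iP1 ν x ^ 2 - 2 * iP2 ν x * iP ν x) - 8 * ν ^ 2 * iP ν x ^ 2) /
    (2 * x * (3 + ν ^ 2 + x ^ 2) * (-1 + 2 * ν ^ 2 - ν ^ 4) * (1 + x) * iQ ν x)

/-- `(x−1)²·(2b+12cx²)/W` in closed form. -/
noncomputable def iPP (ν x : ℝ) : ℝ := -(x - 1) * iP2 ν x / ((1 + x) * iQ ν x)

noncomputable def rCfun (ν x : ℝ) : ℝ := 3 * iE ν x + iG ν x + iWo ν x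

noncomputable def rDfun (ν x : ℝ) : ℝ :=
  iE ν x ^ 2 / 2 + 3 * iE ν x * iG ν x / 2 - iG ν x ^ 2 + iPP ν x +
    3 * iE ν x * iWo ν x / 2

lemma pageB_deriv (ν : ℝ) :
    deriv (pageB ν) = fun x => -2 * ν ^ 2 * x / (3 + 6 * ν ^ 2 - ν ^ 4) := by
  funext x
  have hfun : pageB ν = fun y => (1 - ν ^ 2 * y ^ 2) / (3 + 6 * ν ^ 2 - ν ^ 4) := rfl
  rw [hfun, deriv_div_const, deriv_const_sub, deriv_const_mul _ (by fun_prop), deriv_pow_field]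
  push_cast
  ring

lemma pageB_deriv2 (ν : ℝ) :
    deriv (deriv (pageB ν)) = fun _ => -2 * ν ^ 2 / (3 + 6 * ν ^ 2 - ν ^ 4) := by
  rw [pageB_deriv]
  funext x
  rw [deriv_div_const, deriv_const_mul _ (by fun_prop), deriv_id'']
  ring

section Identities

variable {ν x : ℝ}

lemma aux_pos (hν : ν ∈ Set.Ioo (0 : ℝ) 1) (hx : x ∈ Set.Ioo (1/2 : ℝ) 1) :
    (3 + 6 * ν ^ 2 - ν ^ 4 ≠ 0) ∧ (1 - ν ^ 2 * x ^ 2 ≠ 0) ∧ (x ≠ 0) ∧ (1 + x ≠ 0) ∧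
      (iQ ν x ≠ 0) ∧ (iP ν x ≠ 0) ∧ (-1 + 2 * ν ^ 2 - ν ^ 4 ≠ 0) ∧
      (3 + ν ^ 2 + x ^ 2 ≠ 0) ∧ (x - 1 ≠ 0) := by
  obtain ⟨hν0, hν1⟩ := hν
  obtain ⟨hx0, hx1⟩ := hx
  have hν2 : ν ^ 2 < 1 := by nlinarith
  have hx2 : x ^ 2 < 1 := by nlinarith
  have hxpos : (0:ℝ) < x := by linarith
  have ha : ν ^ 2 * x ^ 2 < 1 := by nlinarith
  have hb : ν ^ 2 * (ν ^ 2 * x ^ 2) < 1 := by nlinarith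
  have hQ : 0 < iQ ν x := by unfold iQ; nlinarith
  have hP : 0 < iP ν x := by
    have hP' : iP ν x = (1 - x ^ 2) * iQ ν x := by unfold iP iQ; ring
    rw [hP']
    exact mul_pos (by linarith) hQ
  refine ⟨by nlinarith, by linarith, ne_of_gt hxpos, by linarith, ne_of_gt hQ,
    ne_of_gt hP, ?_, by positivity, by linarith⟩
  have : -1 + 2 * ν ^ 2 - ν ^ 4 = -((1 - ν ^ 2) ^ 2) := by ring
  rw [this]
  nlinarith

lemma tmW_eq : tmW ν x = iP ν x / (3 + 6 * ν ^ 2 - ν ^ 4) := by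
  unfold tmW tmb tmc tmd iP; ring

lemma tmE_eq (hK : 3 + 6 * ν ^ 2 - ν ^ 4 ≠ 0) (hP : iP ν x ≠ 0) :
    tmE ν x = iP1 ν x / iP ν x := by
  unfold tmE tmb tmc
  rw [tmW_eq]
  unfold iP1
  have hK' : 3 + ν ^ 2 * 6 - ν ^ 4 ≠ 0 := by rwa [mul_comm] at hK
  field_simp
  ring

lemma tmOmega_eq (hK : 3 + 6 * ν ^ 2 - ν ^ 4 ≠ 0) (hu : 1 - ν ^ 2 * x ^ 2 ≠ 0)
    (hx : x ≠ 0) (hP : iP ν x ≠ 0) (hm : -1 + 2 * ν ^ 2 - ν ^ 4 ≠ 0)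
    (h3 : 3 + ν ^ 2 + x ^ 2 ≠ 0) :
    tmOmega ν x =
      ((1 - ν ^ 2 * x ^ 2) * (iP1 ν x ^ 2 - 2 * iP2 ν x * iP ν x) - 8 * ν ^ 2 * iP ν x ^ 2) /
        (2 * x * (3 + ν ^ 2 + x ^ 2) * (-1 + 2 * ν ^ 2 - ν ^ 4) * iP ν x) := by
  simp only [tmOmega, tmF, pageB, pageB_deriv2]
  rw [tmE_eq hK hP, tmW_eq]
  simp only [tmb, tmc, iP1, iP2]
  rw [show iP ν x = ν ^ 2 * (1 + ν ^ 2) * x ^ 4 - (3 + ν ^ 4) * x ^ 2 + (3 - ν ^ 2) from rfl]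
    at hP ⊢
  generalize ν ^ 2 * (1 + ν ^ 2) * x ^ 4 - (3 + ν ^ 4) * x ^ 2 + (3 - ν ^ 2) = P at hP ⊢
  generalize 1 - ν ^ 2 * x ^ 2 = u at hu ⊢
  generalize 3 + 6 * ν ^ 2 - ν ^ 4 = K at hK ⊢
  field_simp
  ring



lemma cancel₁ (t a q : ℝ) (ht : t ≠ 0) (hq : q ≠ 0) :
    t * (a / (-t * q)) = -a / q := by
  field_simp

lemma cancel₂ (t n d q : ℝ) (ht : t ≠ 0) (hd : d ≠ 0) (hq : q ≠ 0) :
    t * (n / (d * (-t * q))) = -n / (d * q) := by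
  field_simp

lemma cancel₃ (t c u K : ℝ) (hu : u ≠ 0) (hK : K ≠ 0) :
    t * (c / K / (u / K)) = c * t / u := by
  field_simp

lemma cancel₄ (t c u K : ℝ) (hu : u ≠ 0) (hK : K ≠ 0) :
    t * (c / K / (2 * (u / K))) = c * t / u / 2 := by
  field_simp

lemma tmC_eq (hK : 3 + 6 * ν ^ 2 - ν ^ 4 ≠ 0) (hu : 1 - ν ^ 2 * x ^ 2 ≠ 0)
    (hx : x ≠ 0) (h1x : 1 + x ≠ 0) (hQ : iQ ν x ≠ 0) (hP : iP ν x ≠ 0)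
    (hm : -1 + 2 * ν ^ 2 - ν ^ 4 ≠ 0) (h3 : 3 + ν ^ 2 + x ^ 2 ≠ 0)
    (hx1 : x - 1 ≠ 0) :
    (x - 1) * tmC ν x = rCfun ν x := by
  have hPf : iP ν x = -(x - 1) * ((1 + x) * iQ ν x) := by unfold iP iQ; ring
  rw [tmC, tmE_eq hK hP, tmOmega_eq hK hu hx hP hm h3]
  simp only [pageB_deriv, pageB, rCfun, iE, iG, iWo]
  rw [hPf]
  have hq : (1 + x) * iQ ν x ≠ 0 := mul_ne_zero h1x hQ
  have hD : 2 * x * (3 + ν ^ 2 + x ^ 2) * (-1 + 2 * ν ^ 2 - ν ^ 4) ≠ 0 :=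
    mul_ne_zero (mul_ne_zero (mul_ne_zero two_ne_zero hx) h3) hm
  have hc1 := cancel₁ (x - 1) (iP1 ν x) ((1 + x) * iQ ν x) hx1 hq
  have hc2 := cancel₃ (x - 1) (-2 * ν ^ 2 * x) (1 - ν ^ 2 * x ^ 2) (3 + 6 * ν ^ 2 - ν ^ 4) hu hK
  have hc3 := cancel₂ (x - 1)
    ((1 - ν ^ 2 * x ^ 2) * (iP1 ν x ^ 2 - 2 * iP2 ν x * (-(x - 1) * ((1 + x) * iQ ν x))) -
      8 * ν ^ 2 * (-(x - 1) * ((1 + x) * iQ ν x)) ^ 2)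
    (2 * x * (3 + ν ^ 2 + x ^ 2) * (-1 + 2 * ν ^ 2 - ν ^ 4)) ((1 + x) * iQ ν x) hx1 hD hq
  linear_combination 3 * hc1 + hc2 + hc3

set_option maxHeartbeats 1000000 in
lemma tmD_eq (hK : 3 + 6 * ν ^ 2 - ν ^ 4 ≠ 0) (hu : 1 - ν ^ 2 * x ^ 2 ≠ 0)
    (hx : x ≠ 0) (h1x : 1 + x ≠ 0) (hQ : iQ ν x ≠ 0) (hP : iP ν x ≠ 0)
    (hm : -1 + 2 * ν ^ 2 - ν ^ 4 ≠ 0) (h3 : 3 + ν ^ 2 + x ^ 2 ≠ 0)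
    (hx1 : x - 1 ≠ 0) :
    (x - 1) ^ 2 * tmD ν x = rDfun ν x := by
  have hPf : iP ν x = -(x - 1) * ((1 + x) * iQ ν x) := by unfold iP iQ; ring
  have hq : (1 + x) * iQ ν x ≠ 0 := mul_ne_zero h1x hQ
  have hD : 2 * x * (3 + ν ^ 2 + x ^ 2) * (-1 + 2 * ν ^ 2 - ν ^ 4) ≠ 0 :=
    mul_ne_zero (mul_ne_zero (mul_ne_zero two_ne_zero hx) h3) hm
  rw [tmD, tmE_eq hK hP, tmOmega_eq hK hu hx hP hm h3, tmW_eq]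
  rw [show (2 * tmb ν + 12 * tmc ν * x ^ 2) / (iP ν x / (3 + 6 * ν ^ 2 - ν ^ 4)) =
      iP2 ν x / iP ν x from by
    unfold tmb tmc iP2
    rw [show iP ν x = ν ^ 2 * (1 + ν ^ 2) * x ^ 4 - (3 + ν ^ 4) * x ^ 2 + (3 - ν ^ 2) from rfl]
      at hP ⊢
    have hK' : 3 + ν ^ 2 * 6 - ν ^ 4 ≠ 0 := by rwa [mul_comm] at hK
    field_simp
    ring]
  simp only [pageB_deriv, pageB, rDfun]
  rw [hPf]
  have hc1 : (x - 1) * (iP1 ν x / (-(x - 1) * ((1 + x) * iQ ν x))) = iE ν x := by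
    simp only [iE]; exact cancel₁ _ _ _ hx1 hq
  have hc2 : (x - 1) * (-2 * ν ^ 2 * x / (3 + 6 * ν ^ 2 - ν ^ 4) /
      ((1 - ν ^ 2 * x ^ 2) / (3 + 6 * ν ^ 2 - ν ^ 4))) = iG ν x := by
    simp only [iG]; exact cancel₃ _ _ _ _ hu hK
  have hc2b : (x - 1) * (-2 * ν ^ 2 * x / (3 + 6 * ν ^ 2 - ν ^ 4) /
      (2 * ((1 - ν ^ 2 * x ^ 2) / (3 + 6 * ν ^ 2 - ν ^ 4)))) = iG ν x / 2 := by
    simp only [iG]; exact (cancel₄ _ _ _ _ hu hK).trans (by ring)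
  have hc3 : (x - 1) *
      (((1 - ν ^ 2 * x ^ 2) * (iP1 ν x ^ 2 - 2 * iP2 ν x * (-(x - 1) * ((1 + x) * iQ ν x))) -
          8 * ν ^ 2 * (-(x - 1) * ((1 + x) * iQ ν x)) ^ 2) /
        (2 * x * (3 + ν ^ 2 + x ^ 2) * (-1 + 2 * ν ^ 2 - ν ^ 4) *
          (-(x - 1) * ((1 + x) * iQ ν x)))) = iWo ν x := by
    simp only [iWo]
    rw [hPf]
    exact (cancel₂ _ _ _ _ hx1 hD hq).trans (by ring)
  have hc4 : (x - 1) * (iP2 ν x / (-(x - 1) * ((1 + x) * iQ ν x))) =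
      -iP2 ν x / ((1 + x) * iQ ν x) :=
    cancel₁ _ _ _ hx1 hq
  have hPP : (x - 1) * (-iP2 ν x / ((1 + x) * iQ ν x)) = iPP ν x := by
    simp only [iPP]; ring
  linear_combination
    (((x - 1) * (iP1 ν x / (-(x - 1) * ((1 + x) * iQ ν x))) + iE ν x) / 2 +
        (3 / 2) * iG ν x + (3 / 2) * iWo ν x) * hc1 +
      (-((x - 1) * (-2 * ν ^ 2 * x / (3 + 6 * ν ^ 2 - ν ^ 4) /
          ((1 - ν ^ 2 * x ^ 2) / (3 + 6 * ν ^ 2 - ν ^ 4))) + iG ν x)) * hc2 +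
      3 * (x - 1) * (iP1 ν x / (-(x - 1) * ((1 + x) * iQ ν x))) * hc2b +
      (3 / 2) * (x - 1) * (iP1 ν x / (-(x - 1) * ((1 + x) * iQ ν x))) * hc3 +
      (x - 1) * hc4 + hPP

end Identities

lemma iE_one (ν : ℝ) (hν : ν ∈ Set.Ioo (0 : ℝ) 1) : iE ν 1 = 1 := by
  obtain ⟨hν0, hν1⟩ := hν
  have hν2 : ν ^ 2 < 1 := by nlinarith
  have d1 : (1 + 1) * iQ ν 1 ≠ 0 := by unfold iQ; nlinarith
  simp only [iE]
  rw [div_eq_one_iff_eq d1]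
  unfold iP1 iQ
  ring

lemma iWo_one (ν : ℝ) (hν : ν ∈ Set.Ioo (0 : ℝ) 1) :
    iWo ν 1 = (3 + ν ^ 2) / (4 + ν ^ 2) := by
  obtain ⟨hν0, hν1⟩ := hν
  have hν2 : ν ^ 2 < 1 := by nlinarith
  have hQ1 : (0:ℝ) < iQ ν 1 := by unfold iQ; nlinarith
  have hm : -1 + 2 * ν ^ 2 - ν ^ 4 < 0 := by nlinarith [sq_nonneg (1 - ν ^ 2)]
  have h4 : (4 : ℝ) + ν ^ 2 ≠ 0 := by positivity
  have d3 : 2 * 1 * (3 + ν ^ 2 + 1 ^ 2) * (-1 + 2 * ν ^ 2 - ν ^ 4) * (1 + 1) * iQ ν 1 ≠ 0 :=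
    mul_ne_zero (mul_ne_zero (mul_ne_zero (mul_ne_zero (by norm_num)
      (by positivity)) (ne_of_lt hm)) (by norm_num)) (ne_of_gt hQ1)
  simp only [iWo]
  rw [div_eq_div_iff d3 h4]
  unfold iP iP1 iP2 iQ
  ring

lemma rC_val (ν : ℝ) (hν : ν ∈ Set.Ioo (0 : ℝ) 1) :
    rCfun ν 1 = (15 + 4 * ν ^ 2) / (4 + ν ^ 2) := by
  have h4 : (4 : ℝ) + ν ^ 2 ≠ 0 := by positivity
  have hG : iG ν 1 = 0 := by simp [iG]
  simp only [rCfun, iE_one ν hν, iWo_one ν hν, hG]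
  field_simp
  ring

lemma rD_val (ν : ℝ) (hν : ν ∈ Set.Ioo (0 : ℝ) 1) :
    rDfun ν 1 = (13 + 4 * ν ^ 2) / (2 * (4 + ν ^ 2)) := by
  have h4 : (4 : ℝ) + ν ^ 2 ≠ 0 := by positivity
  have hG : iG ν 1 = 0 := by simp [iG]
  have hPP : iPP ν 1 = 0 := by simp [iPP]
  simp only [rDfun, iE_one ν hν, iWo_one ν hν, hG, hPP]
  field_simp
  ring

lemma rC_cont (ν : ℝ) (hν : ν ∈ Set.Ioo (0 : ℝ) 1) : ContinuousAt (rCfun ν) 1 := by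
  obtain ⟨hν0, hν1⟩ := hν
  have hν2 : ν ^ 2 < 1 := by nlinarith
  have hQ1 : (0:ℝ) < iQ ν 1 := by unfold iQ; nlinarith
  have hm : -1 + 2 * ν ^ 2 - ν ^ 4 < 0 := by nlinarith [sq_nonneg (1 - ν ^ 2)]
  have cE : ContinuousAt (fun x => iE ν x) 1 := by
    simp only [iE]
    apply ContinuousAt.div
    · unfold iP1; fun_prop
    · unfold iQ; fun_prop
    · exact ne_of_gt (mul_pos (by norm_num) hQ1)
  have cG : ContinuousAt (fun x => iG ν x) 1 := by
    simp only [iG]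
    apply ContinuousAt.div
    · fun_prop
    · fun_prop
    · nlinarith
  have cW : ContinuousAt (fun x => iWo ν x) 1 := by
    simp only [iWo]
    apply ContinuousAt.div
    · unfold iP iP1 iP2; fun_prop
    · unfold iQ; fun_prop
    · refine mul_ne_zero (mul_ne_zero (mul_ne_zero (mul_ne_zero (by norm_num)
        (by positivity)) (ne_of_lt hm)) (by norm_num)) ?_
      unfold iQ; nlinarith
  have : ContinuousAt (fun x => 3 * iE ν x + iG ν x + iWo ν x) 1 :=
    ((continuousAt_const.mul cE).add cG).add cW
  exact this.congr (by filter_upwards with x; simp [rCfun])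

lemma rD_cont (ν : ℝ) (hν : ν ∈ Set.Ioo (0 : ℝ) 1) : ContinuousAt (rDfun ν) 1 := by
  obtain ⟨hν0, hν1⟩ := hν
  have hν2 : ν ^ 2 < 1 := by nlinarith
  have hQ1 : (0:ℝ) < iQ ν 1 := by unfold iQ; nlinarith
  have hm : -1 + 2 * ν ^ 2 - ν ^ 4 < 0 := by nlinarith [sq_nonneg (1 - ν ^ 2)]
  have cE : ContinuousAt (fun x => iE ν x) 1 := by
    simp only [iE]
    apply ContinuousAt.div
    · unfold iP1; fun_prop
    · unfold iQ; fun_prop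
    · exact ne_of_gt (mul_pos (by norm_num) hQ1)
  have cG : ContinuousAt (fun x => iG ν x) 1 := by
    simp only [iG]
    apply ContinuousAt.div
    · fun_prop
    · fun_prop
    · nlinarith
  have cW : ContinuousAt (fun x => iWo ν x) 1 := by
    simp only [iWo]
    apply ContinuousAt.div
    · unfold iP iP1 iP2; fun_prop
    · unfold iQ; fun_prop
    · refine mul_ne_zero (mul_ne_zero (mul_ne_zero (mul_ne_zero (by norm_num)
        (by positivity)) (ne_of_lt hm)) (by norm_num)) ?_
      unfold iQ; nlinarith
  have cP : ContinuousAt (fun x => iPP ν x) 1 := by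
    simp only [iPP]
    apply ContinuousAt.div
    · unfold iP2; fun_prop
    · unfold iQ; fun_prop
    · exact ne_of_gt (mul_pos (by norm_num) hQ1)
  have : ContinuousAt (fun x => iE ν x ^ 2 / 2 + 3 * iE ν x * iG ν x / 2 - iG ν x ^ 2 +
      iPP ν x + 3 * iE ν x * iWo ν x / 2) 1 := by
    exact (((((cE.pow 2).div_const 2).add
      (((continuousAt_const.mul cE).mul cG).div_const 2)).sub (cG.pow 2)).add cP).add
      (((continuousAt_const.mul cE).mul cW).div_const 2)
  exact this.congr (by filter_upwards with x; simp [rDfun])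

/-- **Indicial analysis of the tensor-mode master equation at `x = 1`.** For `ν ∈ (0,1)`:
`lim_{x→1⁻}(x−1)C(x) = (15+4ν²)/(4+ν²)`, `lim_{x→1⁻}(x−1)²D(x) = (13+4ν²)/(2(4+ν²))`, and the
indicial equation `p(p+1) − ((15+4ν²)/(4+ν²))p + (13+4ν²)/(2(4+ν²)) = 0`, equivalently
`(4+ν²)p² − (11+3ν²)p + (13+4ν²)/2 = 0`, has exactly the two roots
`p_± = (11 + 3ν² ± √(17 + 8ν² + ν⁴))/(2(4+ν²))`. -/
theorem page_tensor_indicial_equation (ν : ℝ) (hν : ν ∈ Set.Ioo (0 : ℝ) 1) :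
    Filter.Tendsto (fun x => (x - 1) * tmC ν x) (nhdsWithin 1 (Set.Iio 1))
      (nhds ((15 + 4 * ν ^ 2) / (4 + ν ^ 2))) ∧
    Filter.Tendsto (fun x => (x - 1) ^ 2 * tmD ν x) (nhdsWithin 1 (Set.Iio 1))
      (nhds ((13 + 4 * ν ^ 2) / (2 * (4 + ν ^ 2)))) ∧
    ∀ p : ℝ,
      (p * (p + 1) - (15 + 4 * ν ^ 2) / (4 + ν ^ 2) * p +
          (13 + 4 * ν ^ 2) / (2 * (4 + ν ^ 2)) = 0 ↔
        (4 + ν ^ 2) * p ^ 2 - (11 + 3 * ν ^ 2) * p + (13 + 4 * ν ^ 2) / 2 = 0) ∧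
      ((4 + ν ^ 2) * p ^ 2 - (11 + 3 * ν ^ 2) * p + (13 + 4 * ν ^ 2) / 2 = 0 ↔
        p = (11 + 3 * ν ^ 2 + Real.sqrt (17 + 8 * ν ^ 2 + ν ^ 4)) / (2 * (4 + ν ^ 2)) ∨
        p = (11 + 3 * ν ^ 2 - Real.sqrt (17 + 8 * ν ^ 2 + ν ^ 4)) / (2 * (4 + ν ^ 2))) := by
  obtain ⟨hν0, hν1⟩ := hν
  have hmem : Set.Ioo (1/2 : ℝ) 1 ∈ nhdsWithin (1 : ℝ) (Set.Iio 1) :=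
    Ioo_mem_nhdsLT_of_mem (by constructor <;> norm_num)
  refine ⟨?_, ?_, ?_⟩
  · have heq : ∀ᶠ x in nhdsWithin (1 : ℝ) (Set.Iio 1), rCfun ν x = (x - 1) * tmC ν x := by
      filter_upwards [hmem] with x hx
      obtain ⟨hK, hu, hx0, h1x, hQ, hP, hm', h3, hx1⟩ := aux_pos ⟨hν0, hν1⟩ hx
      exact (tmC_eq hK hu hx0 h1x hQ hP hm' h3 hx1).symm
    have ht : Filter.Tendsto (rCfun ν) (nhdsWithin 1 (Set.Iio 1))
        (nhds ((15 + 4 * ν ^ 2) / (4 + ν ^ 2))) := by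
      have h := (rC_cont ν ⟨hν0, hν1⟩).tendsto
      rw [rC_val ν ⟨hν0, hν1⟩] at h
      exact h.mono_left nhdsWithin_le_nhds
    exact ht.congr' heq
  · have heq : ∀ᶠ x in nhdsWithin (1 : ℝ) (Set.Iio 1), rDfun ν x = (x - 1) ^ 2 * tmD ν x := by
      filter_upwards [hmem] with x hx
      obtain ⟨hK, hu, hx0, h1x, hQ, hP, hm', h3, hx1⟩ := aux_pos ⟨hν0, hν1⟩ hx
      exact (tmD_eq hK hu hx0 h1x hQ hP hm' h3 hx1).symm
    have ht : Filter.Tendsto (rDfun ν) (nhdsWithin 1 (Set.Iio 1))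
        (nhds ((13 + 4 * ν ^ 2) / (2 * (4 + ν ^ 2)))) := by
      have h := (rD_cont ν ⟨hν0, hν1⟩).tendsto
      rw [rD_val ν ⟨hν0, hν1⟩] at h
      exact h.mono_left nhdsWithin_le_nhds
    exact ht.congr' heq
  · intro p
    have h4 : (0 : ℝ) < 4 + ν ^ 2 := by positivity
    have hΔ : (0 : ℝ) ≤ 17 + 8 * ν ^ 2 + ν ^ 4 := by positivity
    set s := Real.sqrt (17 + 8 * ν ^ 2 + ν ^ 4) with hs_def
    have hs : s ^ 2 = 17 + 8 * ν ^ 2 + ν ^ 4 := Real.sq_sqrt hΔ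
    have factor : 4 * (4 + ν ^ 2) *
        ((4 + ν ^ 2) * p ^ 2 - (11 + 3 * ν ^ 2) * p + (13 + 4 * ν ^ 2) / 2) =
        (2 * (4 + ν ^ 2) * p - (11 + 3 * ν ^ 2 + s)) *
          (2 * (4 + ν ^ 2) * p - (11 + 3 * ν ^ 2 - s)) := by
      linear_combination hs
    constructor
    · have key : p * (p + 1) - (15 + 4 * ν ^ 2) / (4 + ν ^ 2) * p +
          (13 + 4 * ν ^ 2) / (2 * (4 + ν ^ 2)) =
          ((4 + ν ^ 2) * p ^ 2 - (11 + 3 * ν ^ 2) * p + (13 + 4 * ν ^ 2) / 2) / (4 + ν ^ 2) := by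
        field_simp
        ring
      rw [key, div_eq_zero_iff]
      simp [h4.ne']
    · constructor
      · intro h
        have h2 : (2 * (4 + ν ^ 2) * p - (11 + 3 * ν ^ 2 + s)) *
            (2 * (4 + ν ^ 2) * p - (11 + 3 * ν ^ 2 - s)) = 0 := by
          rw [← factor, h, mul_zero]
        rcases mul_eq_zero.1 h2 with h3 | h3
        · left
          rw [eq_div_iff (by positivity : 2 * (4 + ν ^ 2) ≠ 0)]
          linarith
        · right
          rw [eq_div_iff (by positivity : 2 * (4 + ν ^ 2) ≠ 0)]
          linarith
      · intro h
        have h0 : 4 * (4 + ν ^ 2) *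
            ((4 + ν ^ 2) * p ^ 2 - (11 + 3 * ν ^ 2) * p + (13 + 4 * ν ^ 2) / 2) = 0 := by
          rw [factor]
          rcases h with h | h
          · have : 2 * (4 + ν ^ 2) * p - (11 + 3 * ν ^ 2 + s) = 0 := by
              rw [h]; field_simp; ring
            rw [this, zero_mul]
          · have : 2 * (4 + ν ^ 2) * p - (11 + 3 * ν ^ 2 - s) = 0 := by
              rw [h]; field_simp; ring
            rw [this, mul_zero]
        exact (mul_eq_zero.1 h0).resolve_left (by positivity)
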